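/- arXiv:1912.09936 — 2 statements merged into one kernel-verified Lean document; each statement's English description precedes it below -/
import Mathlib

section
/- Bayes-rule re-parameterization of the mediator density ratio: for discrete random variables W, A, Z, M with strictly positive joint probabilities, the ratio p(m | a*, w) / p(m | a, z, w) equals [g(a|w)/g(a*|w)] · [q(z|a,w)/r(z|a,m,w)] · [h(a*|m,w)/h(a|m,w)], where g(a|w) = P(A=a|W=w), q(z|a,w) = P(Z=z|A=a,W=w), r(z|a,m,w) = P(Z=z|A=a,M=m,W=w), h(a|m,w) = P(A=a|M=m,W=w), p(m|a,w) = P(M=m|A=a,W=w), and p(m|a,z,w) = P(M=m|A=a,Z=z,W=w). -/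
open Finset
open scoped Classical

/-- Probability of the event `S` under the pmf `P` on a finite outcome space. -/
noncomputable def pr {Ω : Type*} [Fintype Ω] (P : Ω → ℝ) (S : Ω → Prop) : ℝ :=
  ∑ ω, if S ω then P ω else 0

/-- Conditional probability `P(S | T)`. -/
noncomputable def cpr {Ω : Type*} [Fintype Ω] (P : Ω → ℝ) (S T : Ω → Prop) : ℝ :=
  pr P (fun ω => S ω ∧ T ω) / pr P T

lemma pr_mono {Ω : Type*} [Fintype Ω] (P : Ω → ℝ) (hP : ∀ ω, 0 ≤ P ω)
    {S T : Ω → Prop} (h : ∀ ω, S ω → T ω) : pr P S ≤ pr P T := by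
  unfold pr
  apply Finset.sum_le_sum
  intro ω _
  by_cases hs : S ω
  · simp [hs, h ω hs]
  · simp only [hs, if_false]
    by_cases ht : T ω <;> simp [ht, hP ω]

lemma pr_congr {Ω : Type*} [Fintype Ω] (P : Ω → ℝ)
    {S T : Ω → Prop} (h : ∀ ω, S ω ↔ T ω) : pr P S = pr P T := by
  unfold pr
  congr 1
  ext ω
  simp [h ω]

/-- Bayes-rule re-parameterization of the mediator density ratio:
`p(m|a*,w)/p(m|a,z,w) = [g(a|w)/g(a*|w)] ⬝ [q(z|a,w)/r(z|a,m,w)] ⬝ [h(a*|m,w)/h(a|m,w)]`. -/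
theorem mediator_density_ratio_reparam {Ω 𝒲 𝒜 𝒵 ℳ : Type*} [Fintype Ω]
    (P : Ω → ℝ) (hP : ∀ ω, 0 ≤ P ω) (hsum : ∑ ω, P ω = 1)
    (W : Ω → 𝒲) (A : Ω → 𝒜) (Z : Ω → 𝒵) (M : Ω → ℳ)
    (hpos : ∀ w a z m,
      0 < pr P (fun ω => W ω = w ∧ A ω = a ∧ Z ω = z ∧ M ω = m))
    (w : 𝒲) (a astar : 𝒜) (z : 𝒵) (m : ℳ) :
    cpr P (fun ω => M ω = m) (fun ω => A ω = astar ∧ W ω = w) /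
        cpr P (fun ω => M ω = m) (fun ω => A ω = a ∧ Z ω = z ∧ W ω = w) =
      (cpr P (fun ω => A ω = a) (fun ω => W ω = w) /
          cpr P (fun ω => A ω = astar) (fun ω => W ω = w)) *
        (cpr P (fun ω => Z ω = z) (fun ω => A ω = a ∧ W ω = w) /
          cpr P (fun ω => Z ω = z) (fun ω => A ω = a ∧ M ω = m ∧ W ω = w)) *
        (cpr P (fun ω => A ω = astar) (fun ω => M ω = m ∧ W ω = w) /
          cpr P (fun ω => A ω = a) (fun ω => M ω = m ∧ W ω = w)) := by
  -- abbreviations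
  have key : ∀ (a' : 𝒜) (S : Ω → Prop),
      (∀ ω, (W ω = w ∧ A ω = a' ∧ Z ω = z ∧ M ω = m) → S ω) → 0 < pr P S := by
    intro a' S h
    exact lt_of_lt_of_le (hpos w a' z m) (pr_mono P hP h)
  -- positivity of all denominators / factors
  have hW : 0 < pr P (fun ω => W ω = w) := key a _ (by tauto)
  have hAW : 0 < pr P (fun ω => A ω = a ∧ W ω = w) := key a _ (by tauto)
  have hA'W : 0 < pr P (fun ω => A ω = astar ∧ W ω = w) := key astar _ (by tauto)
  have hMW : 0 < pr P (fun ω => M ω = m ∧ W ω = w) := key a _ (by tauto)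
  have hAMW : 0 < pr P (fun ω => (A ω = a) ∧ M ω = m ∧ W ω = w) := key a _ (by tauto)
  have hA'MW : 0 < pr P (fun ω => (A ω = astar) ∧ M ω = m ∧ W ω = w) := key astar _ (by tauto)
  have hAZW : 0 < pr P (fun ω => A ω = a ∧ Z ω = z ∧ W ω = w) := key a _ (by tauto)
  have hZAW : 0 < pr P (fun ω => (Z ω = z) ∧ A ω = a ∧ W ω = w) := key a _ (by tauto)
  have hMA'W : 0 < pr P (fun ω => (M ω = m) ∧ A ω = astar ∧ W ω = w) := key astar _ (by tauto)
  have hMAZW : 0 < pr P (fun ω => (M ω = m) ∧ A ω = a ∧ Z ω = z ∧ W ω = w) := key a _ (by tauto)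
  have hZAMW : 0 < pr P (fun ω => (Z ω = z) ∧ A ω = a ∧ M ω = m ∧ W ω = w) := key a _ (by tauto)
  -- reordering identities
  have e1 : pr P (fun ω => (M ω = m) ∧ A ω = astar ∧ W ω = w)
      = pr P (fun ω => (A ω = astar) ∧ M ω = m ∧ W ω = w) := pr_congr P (by tauto)
  have e2 : pr P (fun ω => (M ω = m) ∧ A ω = a ∧ Z ω = z ∧ W ω = w)
      = pr P (fun ω => (Z ω = z) ∧ A ω = a ∧ M ω = m ∧ W ω = w) := pr_congr P (by tauto)
  have e3 : pr P (fun ω => (Z ω = z) ∧ A ω = a ∧ W ω = w)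
      = pr P (fun ω => (A ω = a) ∧ Z ω = z ∧ W ω = w) := pr_congr P (by tauto)
  unfold cpr
  rw [e1, e2, e3]
  rw [e3] at hZAW
  field_simp
end

section
/- The uncentered efficient influence function is unbiased for θ: with all nuisance functions evaluated at their true values, E[D_P(O)] = θ, where θ = Σ_{w,z,m} b(a',z,m,w) q(z|a',w) p(m|a*,w) p(w) and D_P(o) = 1{a=a'}/g(a'|w) · c(a',z,m,w) · (y − b(a',z,m,w)) + 1{a=a'}/g(a'|w) · (u(z,a',w) − Σ_z u(z,a',w) q(z|a',w)) + 1{a=a*}/g(a*|w) · (Σ_z b(a',z,m,w) q(z|a',w) − v(a*,w)) + v(a*,w). -/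
/-!
Expanding `D_P`, three of its four terms have the form `E[h(K) (f - E[f | K])]` and vanish:
`Y - b(a',Z,M,W)` is a residual given `K = (A,Z,M,W)`; `Σ_z u(z,a',W) q(z|a',W)` is
`E[u(Z,a',W) | A = a', W]`, and `v(a*,W)` is `E[Σ_z b(a',z,M,W) q(z|a',W) | A = a*, W]`, both with
`K = (A,W)`. What is left, `E[v(a*,W)]`, is `θ`. On a cell of probability zero the conditional
mean takes the junk value `0`, which is harmless because `P ≥ 0` makes the cell contribute nothing.
-/

open Finset
open scoped Classical

/-- Conditional expectation `E[f | T]` (pmf-weighted average). -/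
noncomputable def cex {Ω : Type*} [Fintype Ω] (P : Ω → ℝ) (f : Ω → ℝ)
    (T : Ω → Prop) : ℝ :=
  (∑ ω, if T ω then P ω * f ω else 0) / pr P T

section ConditionalExpectation

variable {Ω : Type*} [Fintype Ω] {P : Ω → ℝ}

lemma sum_mul_comp_eq_sum_mul_pr {γ : Type*} [Fintype γ] (Q : Ω → ℝ) (V : Ω → γ)
    (g : γ → ℝ) : ∑ ω, Q ω * g (V ω) = ∑ v, g v * pr Q (fun ω => V ω = v) := by
  simp only [pr, mul_sum, mul_ite, mul_zero]
  rw [sum_comm]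
  refine sum_congr rfl fun ω _ => ?_
  rw [sum_ite_eq, if_pos (mem_univ _), mul_comm]

lemma cex_comp_eq_sum_mul_cpr {γ : Type*} [Fintype γ] (V : Ω → γ) (g : γ → ℝ)
    (T : Ω → Prop) :
    cex P (fun ω => g (V ω)) T = ∑ v, g v * cpr P (fun ω => V ω = v) T := by
  have h := sum_mul_comp_eq_sum_mul_pr (fun ω => if T ω then P ω else 0) V g
  simp only [ite_mul, zero_mul] at h
  simp only [cex, cpr, h, sum_div, mul_div_assoc]
  refine sum_congr rfl fun v _ => ?_
  congr 2
  exact sum_congr rfl fun ω _ => by by_cases hV : V ω = v <;> simp [hV]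

lemma cex_congr {f g : Ω → ℝ} {T : Ω → Prop} (h : ∀ ω, T ω → f ω = g ω) :
    cex P f T = cex P g T := by
  unfold cex
  congr 1
  refine sum_congr rfl fun ω _ => ?_
  split_ifs with hT
  · rw [h ω hT]
  · rfl

lemma sum_ite_mul_eq_cex_mul_pr (hP : ∀ ω, 0 ≤ P ω) (f : Ω → ℝ) (T : Ω → Prop) :
    (∑ ω, if T ω then P ω * f ω else 0) = cex P f T * pr P T := by
  by_cases hT : pr P T = 0
  · have hPT : ∀ ω, T ω → P ω = 0 := fun ω hω => by
      have := (sum_eq_zero_iff_of_nonneg fun ω _ => ?_).1 hT ω (mem_univ ω)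
      · simpa [hω] using this
      · split_ifs <;> simp [hP]
    rw [hT, mul_zero]
    exact sum_eq_zero fun ω _ => by split_ifs with hω <;> simp [hPT ω, *]
  · unfold cex
    field_simp

lemma sum_mul_sub_cex_eq_zero (hP : ∀ ω, 0 ≤ P ω) {β : Type*} (κ : Ω → β)
    (h : β → ℝ) (f : Ω → ℝ) :
    ∑ ω, P ω * h (κ ω) * (f ω - cex P f (fun ω' => κ ω' = κ ω)) = 0 := by
  rw [← sum_fiberwise_of_maps_to (t := univ.image κ) fun ω _ => mem_image_of_mem κ (mem_univ ω)]
  refine sum_eq_zero fun k _ => ?_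
  calc ∑ ω ∈ univ with κ ω = k, P ω * h (κ ω) * (f ω - cex P f (fun ω' => κ ω' = κ ω))
      = h k * ((∑ ω, if κ ω = k then P ω * f ω else 0)
          - cex P f (fun ω => κ ω = k) * pr P (fun ω => κ ω = k)) := by
        rw [pr, ← sum_filter, ← sum_filter, mul_sum, ← sum_sub_distrib, mul_sum]
        exact sum_congr rfl fun ω hω => by rw [(mem_filter.1 hω).2]; ring
    _ = 0 := by rw [sum_ite_mul_eq_cex_mul_pr hP, sub_self, mul_zero]

lemma sum_ite_div_mul_sub_sum_mul_cpr_eq_zero (hP : ∀ ω, 0 ≤ P ω) {α δ γ : Type*} [Fintype γ]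
    (A : Ω → α) (W : Ω → δ) (V : Ω → γ) (a : α) (ψ : δ → ℝ) (X : γ → δ → ℝ) :
    ∑ ω, P ω * ((if A ω = a then (1 : ℝ) else 0) / ψ (W ω) *
      (X (V ω) (W ω) - ∑ v, X v (W ω) *
        cpr P (fun ω' => V ω' = v) (fun ω' => A ω' = a ∧ W ω' = W ω))) = 0 := by
  refine (sum_congr rfl fun ω _ => ?_).trans (sum_mul_sub_cex_eq_zero hP (fun ω => (A ω, W ω))
    (fun k => (if k.1 = a then (1 : ℝ) else 0) / ψ k.2) (fun ω => X (V ω) (W ω)))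
  by_cases hA : A ω = a
  · have hT : (fun ω' => (A ω', W ω') = (A ω, W ω)) = fun ω' => A ω' = a ∧ W ω' = W ω := by
      funext ω'; simp [hA]
    rw [← mul_assoc, hT, cex_congr (g := fun ω' => X (V ω') (W ω)) fun ω' h => by rw [h.2],
      cex_comp_eq_sum_mul_cpr V (fun v => X v (W ω))]
  · simp [hA]

end ConditionalExpectation

section EIF

variable {Ω 𝒲 𝒜 𝒵 ℳ : Type*} [Fintype Ω] [Fintype 𝒲] [Fintype 𝒵] [Fintype ℳ]
variable (P : Ω → ℝ) (W : Ω → 𝒲) (A : Ω → 𝒜) (Z : Ω → 𝒵) (M : Ω → ℳ) (Y : Ω → ℝ)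

/-- `g(a|w) = P(A=a|W=w)`. -/
noncomputable def gg (a : 𝒜) (w : 𝒲) : ℝ :=
  cpr P (fun ω => A ω = a) (fun ω => W ω = w)

/-- `q(z|a,w) = P(Z=z|A=a,W=w)`. -/
noncomputable def qq (z : 𝒵) (a : 𝒜) (w : 𝒲) : ℝ :=
  cpr P (fun ω => Z ω = z) (fun ω => A ω = a ∧ W ω = w)

/-- `p(m|a,w) = P(M=m|A=a,W=w)`. -/
noncomputable def pM (m : ℳ) (a : 𝒜) (w : 𝒲) : ℝ :=
  cpr P (fun ω => M ω = m) (fun ω => A ω = a ∧ W ω = w)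

/-- `p(m|a,z,w) = P(M=m|A=a,Z=z,W=w)`. -/
noncomputable def pMZ (m : ℳ) (a : 𝒜) (z : 𝒵) (w : 𝒲) : ℝ :=
  cpr P (fun ω => M ω = m) (fun ω => A ω = a ∧ Z ω = z ∧ W ω = w)

/-- `b(a,z,m,w) = E[Y|A=a,Z=z,M=m,W=w]`. -/
noncomputable def bb (a : 𝒜) (z : 𝒵) (m : ℳ) (w : 𝒲) : ℝ :=
  cex P Y (fun ω => A ω = a ∧ Z ω = z ∧ M ω = m ∧ W ω = w)

/-- `c(a,z,m,w) = p(m|a*,w)/p(m|a,z,w)`. -/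
noncomputable def cc (astar a : 𝒜) (z : 𝒵) (m : ℳ) (w : 𝒲) : ℝ :=
  pM P W A M m astar w / pMZ P W A Z M m a z w

/-- `u(z,a,w) = Σ_m b(a,z,m,w) p(m|a*,w)`. -/
noncomputable def uu (astar : 𝒜) (z : 𝒵) (a : 𝒜) (w : 𝒲) : ℝ :=
  ∑ m, bb P W A Z M Y a z m w * pM P W A M m astar w

/-- `v(a,w) = Σ_{m,z} b(a',z,m,w) q(z|a',w) p(m|a,w)`. -/
noncomputable def vv (a' : 𝒜) (a : 𝒜) (w : 𝒲) : ℝ :=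
  ∑ m, ∑ z, bb P W A Z M Y a' z m w * qq P W A Z z a' w * pM P W A M m a w

/-- The target parameter `θ = Σ_{w,z,m} b(a',z,m,w) q(z|a',w) p(m|a*,w) p(w)`. -/
noncomputable def θparam (a' astar : 𝒜) : ℝ :=
  ∑ w, ∑ z, ∑ m, bb P W A Z M Y a' z m w * qq P W A Z z a' w *
    pM P W A M m astar w * pr P (fun ω => W ω = w)

/-- The uncentered EIF `D_P(o)` with all nuisances at their true values. -/
noncomputable def Dfun (a' astar : 𝒜) (ω : Ω) : ℝ :=
  (if A ω = a' then (1 : ℝ) else 0) / gg P W A a' (W ω) *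
      cc P W A Z M astar a' (Z ω) (M ω) (W ω) *
      (Y ω - bb P W A Z M Y a' (Z ω) (M ω) (W ω)) +
    (if A ω = a' then (1 : ℝ) else 0) / gg P W A a' (W ω) *
      (uu P W A Z M Y astar (Z ω) a' (W ω) -
        ∑ z, uu P W A Z M Y astar z a' (W ω) * qq P W A Z z a' (W ω)) +
    (if A ω = astar then (1 : ℝ) else 0) / gg P W A astar (W ω) *
      ((∑ z, bb P W A Z M Y a' z (M ω) (W ω) * qq P W A Z z a' (W ω)) -
        vv P W A Z M Y a' astar (W ω)) +
    vv P W A Z M Y a' astar (W ω)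

end EIF

section

variable {Ω 𝒲 𝒜 𝒵 ℳ : Type*} [Fintype Ω]
variable (P : Ω → ℝ) (W : Ω → 𝒲) (A : Ω → 𝒜) (Z : Ω → 𝒵) (M : Ω → ℳ) (Y : Ω → ℝ)

lemma sum_ite_div_mul_mul_sub_bb_eq_zero (hP : ∀ ω, 0 ≤ P ω) (a : 𝒜) (ψ : 𝒲 → ℝ)
    (H : 𝒵 → ℳ → 𝒲 → ℝ) :
    ∑ ω, P ω * ((if A ω = a then (1 : ℝ) else 0) / ψ (W ω) * H (Z ω) (M ω) (W ω) *
      (Y ω - bb P W A Z M Y a (Z ω) (M ω) (W ω))) = 0 := by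
  refine (sum_congr rfl fun ω _ => ?_).trans
    (sum_mul_sub_cex_eq_zero hP (fun ω => (A ω, Z ω, M ω, W ω))
      (fun k => (if k.1 = a then (1 : ℝ) else 0) / ψ k.2.2.2 * H k.2.1 k.2.2.1 k.2.2.2) Y)
  by_cases hA : A ω = a
  · have hT : (fun ω' => (A ω', Z ω', M ω', W ω') = (A ω, Z ω, M ω, W ω)) =
        fun ω' => A ω' = a ∧ Z ω' = Z ω ∧ M ω' = M ω ∧ W ω' = W ω := by
      funext ω'; simp [hA]
    rw [← mul_assoc, hT, bb]
  · simp [hA]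

lemma vv_eq_sum_mul_cpr [Fintype 𝒵] [Fintype ℳ] (a' a : 𝒜) (w : 𝒲) :
    vv P W A Z M Y a' a w =
      ∑ m, (∑ z, bb P W A Z M Y a' z m w * qq P W A Z z a' w) *
        cpr P (fun ω => M ω = m) (fun ω => A ω = a ∧ W ω = w) := by
  simp only [vv, pM, sum_mul]

lemma sum_mul_vv_eq_θparam [Fintype 𝒲] [Fintype 𝒵] [Fintype ℳ] (a' astar : 𝒜) :
    ∑ ω, P ω * vv P W A Z M Y a' astar (W ω) = θparam P W A Z M Y a' astar := by
  rw [sum_mul_comp_eq_sum_mul_pr P W (vv P W A Z M Y a' astar), θparam]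
  refine sum_congr rfl fun w _ => ?_
  rw [vv, sum_mul, sum_comm]
  simp only [sum_mul]

end

section EIF

variable {Ω 𝒲 𝒜 𝒵 ℳ : Type*} [Fintype Ω] [Fintype 𝒲] [Fintype 𝒵] [Fintype ℳ]
variable (P : Ω → ℝ) (W : Ω → 𝒲) (A : Ω → 𝒜) (Z : Ω → 𝒵) (M : Ω → ℳ) (Y : Ω → ℝ)

theorem eif_unbiased (hP : ∀ ω, 0 ≤ P ω) (a' astar : 𝒜) :
    ∑ ω, P ω * Dfun P W A Z M Y a' astar ω = θparam P W A Z M Y a' astar := by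
  have hY := sum_ite_div_mul_mul_sub_bb_eq_zero P W A Z M Y hP a' (gg P W A a')
    (cc P W A Z M astar a')
  have hZ := sum_ite_div_mul_sub_sum_mul_cpr_eq_zero hP A W Z a' (gg P W A a')
    (fun z w => uu P W A Z M Y astar z a' w)
  have hM := sum_ite_div_mul_sub_sum_mul_cpr_eq_zero hP A W M astar (gg P W A astar)
    (fun m w => ∑ z, bb P W A Z M Y a' z m w * qq P W A Z z a' w)
  simp only [← vv_eq_sum_mul_cpr] at hM
  simp only [Dfun, mul_add, sum_add_distrib]
  rw [hY, hM, sum_mul_vv_eq_θparam]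
  unfold qq
  rw [hZ, zero_add, zero_add, zero_add]

end EIF
end
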